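/- arXiv:2507.00035 — 2 statements merged into one kernel-verified Lean document; each statement's English description precedes it below -/
import Mathlib

section
/- Let K be a nonempty subset of a metric space (X,d) and let T, f : K → K be two self-maps such that the closure of T(K) is contained in f(K). Suppose there is a monotonically increasing continuous function φ : [0,∞) → [0,∞) with φ(t) < t for all t > 0 such that for all x, y ∈ K, d(Tx,Ty) ≤ φ( max{ d(fx,fy), d(Tx,fx), d(Ty,fy), (1/2)[d(Tx,fy) + d(Ty,fx)] } ). If either closure(T(K)) or f(K) is a complete metric subspace and the pair (T,f) is weakly compatible, then F(T) ∩ F(f) is a singleton. -/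
/-!
Choosing `x (n+1) ∈ K` with `f (x (n+1)) = T (x n)` gives a Jungck sequence `y n = T (x n)`.
The contractive condition makes `dist (y (n+1)) (y n)` decrease, to `0` by continuity of `φ`,
and then forces `y` to be Cauchy. Its limit `f u` satisfies `T u = f u`; weak compatibility
makes `f u` a second coincidence point, and at two coincidence points `x`, `y` the condition
collapses to `dist (T x) (T y) ≤ φ (dist (T x) (T y))`, so `T x = T y`. This gives both the
fixed point `f u` and its uniqueness.
-/

open Set Filter Topology

/-- The argument of `φ` in the contractive condition, written as a function of the four points
`f x`, `f y`, `T x`, `T y`. -/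
noncomputable def ciricBound {X : Type*} [MetricSpace X] (fx fy Tx Ty : X) : ℝ :=
  max (max (dist fx fy) (dist Tx fx)) (max (dist Ty fy) ((dist Tx fy + dist Ty fx) / 2))

section ciricBound

variable {X : Type*} [MetricSpace X]

theorem ciricBound_nonneg (fx fy Tx Ty : X) : 0 ≤ ciricBound fx fy Tx Ty :=
  le_max_of_le_left (le_max_of_le_left dist_nonneg)

theorem ciricBound_self (a b : X) : ciricBound a b a b = dist a b := by
  rw [ciricBound, dist_self, dist_self, dist_comm b a, add_self_div_two,
    max_eq_left dist_nonneg, max_eq_right dist_nonneg, max_self]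

theorem ciricBound_left_self (p q : X) : ciricBound p p q p = dist q p := by
  have hhalf : 0 ≤ dist q p / 2 := by positivity
  simp only [ciricBound, dist_self, add_zero, max_eq_right dist_nonneg, max_eq_right hhalf,
    max_eq_left (half_le_self dist_nonneg)]

theorem ciricBound_le_max_dist (p q r : X) : ciricBound q p r q ≤ max (dist q p) (dist r q) := by
  have htri : dist r p ≤ dist r q + dist q p := dist_triangle r q p
  rw [ciricBound, dist_self, add_zero]
  refine max_le (max_le (le_max_left _ _) (le_max_right _ _)) (max_le (le_max_left _ _) ?_)
  linarith [le_max_left (dist q p) (dist r q), le_max_right (dist q p) (dist r q)]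

theorem Filter.Tendsto.ciricBound {α : Type*} {l : Filter α} {a b c d : α → X}
    {a₀ b₀ c₀ d₀ : X} (ha : Tendsto a l (𝓝 a₀)) (hb : Tendsto b l (𝓝 b₀))
    (hc : Tendsto c l (𝓝 c₀)) (hd : Tendsto d l (𝓝 d₀)) :
    Tendsto (fun i => _root_.ciricBound (a i) (b i) (c i) (d i)) l
      (𝓝 (_root_.ciricBound a₀ b₀ c₀ d₀)) :=
  ((ha.dist hb).max (hc.dist ha)).max
    ((hd.dist hb).max (((hc.dist hb).add (hd.dist ha)).div_const 2))

end ciricBound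

section comparison

variable {φ : ℝ → ℝ}

theorem eq_zero_of_le_apply (hφlt : ∀ t > (0 : ℝ), φ t < t) {t : ℝ} (ht : 0 ≤ t)
    (h : t ≤ φ t) : t = 0 :=
  ht.eq_or_lt.elim Eq.symm fun hpos => absurd (hφlt t hpos) h.not_gt

theorem eq_of_dist_le_apply_dist {X : Type*} [MetricSpace X] (hφlt : ∀ t > (0 : ℝ), φ t < t)
    {a b : X} (h : dist a b ≤ φ (dist a b)) : a = b :=
  dist_eq_zero.1 (eq_zero_of_le_apply hφlt dist_nonneg h)

theorem le_apply_of_tendsto (hφ : ContinuousOn φ (Ici 0)) {α : Type*} {l : Filter α} [l.NeBot]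
    {a b : α → ℝ} {s t : ℝ} (ha : Tendsto a l (𝓝 s)) (hb : Tendsto b l (𝓝 t))
    (ha0 : ∀ i, 0 ≤ a i) (hab : ∀ i, b i ≤ φ (a i)) : t ≤ φ s := by
  have hs : 0 ≤ s := ge_of_tendsto' ha ha0
  have hφa : Tendsto (fun i => φ (a i)) l (𝓝 (φ s)) :=
    (hφ s hs).tendsto.comp (tendsto_nhdsWithin_iff.2 ⟨ha, .of_forall ha0⟩)
  exact le_of_tendsto_of_tendsto' hb hφa hab

theorem exists_pos_apply_add_lt_sub (hφ : ContinuousOn φ (Ici 0)) {c : ℝ} (hc : 0 < c)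
    (hφc : φ c < c) : ∃ η > 0, φ (c + η) < c - η := by
  have hcont : ContinuousAt (fun η => φ (c + η) + η) 0 := by
    have hφc' : ContinuousAt φ (c + 0) := by
      simpa using hφ.continuousAt (Ici_mem_nhds hc)
    exact (hφc'.comp (continuousAt_const.add continuousAt_id)).add continuousAt_id
  have hev : ∀ᶠ η in 𝓝 0, φ (c + η) + η < c :=
    hcont.eventually (gt_mem_nhds (by simpa using hφc))
  obtain ⟨η, hη, hpos⟩ :=
    ((hev.filter_mono nhdsWithin_le_nhds).and (self_mem_nhdsWithin (s := Ioi 0))).exists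
  exact ⟨η, hpos, by linarith⟩

end comparison

section sequence

variable {X : Type*} [MetricSpace X] {φ : ℝ → ℝ} {y : ℕ → X}

theorem dist_succ_le_apply_dist (hφmono : MonotoneOn φ (Ici 0))
    (hφlt : ∀ t > (0 : ℝ), φ t < t)
    (hy : ∀ n m, dist (y (n + 1)) (y (m + 1)) ≤
      φ (ciricBound (y n) (y m) (y (n + 1)) (y (m + 1))))
    (n : ℕ) :
    dist (y (n + 2)) (y (n + 1)) ≤ dist (y (n + 1)) (y n) ∧
      dist (y (n + 2)) (y (n + 1)) ≤ φ (dist (y (n + 1)) (y n)) := by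
  set a := dist (y (n + 1)) (y n)
  set b := dist (y (n + 2)) (y (n + 1))
  have hmax : b ≤ φ (max a b) :=
    (hy (n + 1) n).trans <| hφmono (ciricBound_nonneg ..) (le_max_of_le_left dist_nonneg)
      (ciricBound_le_max_dist ..)
  have hba : b ≤ a := by
    by_contra! hab
    rw [max_eq_right hab.le] at hmax
    have hb0 : b = 0 := eq_zero_of_le_apply hφlt dist_nonneg hmax
    linarith [(dist_nonneg : 0 ≤ a)]
  exact ⟨hba, max_eq_left hba ▸ hmax⟩

theorem tendsto_dist_succ_zero (hφmono : MonotoneOn φ (Ici 0)) (hφcont : ContinuousOn φ (Ici 0))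
    (hφlt : ∀ t > (0 : ℝ), φ t < t)
    (hy : ∀ n m, dist (y (n + 1)) (y (m + 1)) ≤
      φ (ciricBound (y n) (y m) (y (n + 1)) (y (m + 1)))) :
    Tendsto (fun n => dist (y (n + 1)) (y n)) atTop (𝓝 0) := by
  set d := fun n => dist (y (n + 1)) (y n)
  have hd := dist_succ_le_apply_dist hφmono hφlt hy
  have hbdd : BddBelow (range d) := ⟨0, by rintro _ ⟨n, rfl⟩; exact dist_nonneg⟩
  have hlim : Tendsto d atTop (𝓝 (⨅ n, d n)) :=
    tendsto_atTop_ciInf (antitone_nat_of_succ_le fun n => (hd n).1) hbdd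
  have hfix : ⨅ n, d n ≤ φ (⨅ n, d n) :=
    le_apply_of_tendsto hφcont hlim (hlim.comp (tendsto_add_atTop_nat 1)) (fun _ => dist_nonneg)
      fun n => (hd n).2
  rwa [eq_zero_of_le_apply hφlt (le_ciInf fun _ => dist_nonneg) hfix] at hlim

/-- The bound propagates from `m` to `m + 1`: given `dist (y n) (y m) ≤ c` and
`dist (y (n + 1)) (y m) ≤ c`, the argument of `φ` at `(n, m)` is at most `c + η`, whence
`dist (y n) (y (m + 1)) < η + (c - η)`. -/
theorem dist_le_of_dist_succ_lt (hφmono : MonotoneOn φ (Ici 0))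
    (hy : ∀ n m, dist (y (n + 1)) (y (m + 1)) ≤
      φ (ciricBound (y n) (y m) (y (n + 1)) (y (m + 1))))
    {c η : ℝ} (hη : φ (c + η) < c - η) {N : ℕ}
    (hN : ∀ n ≥ N, dist (y (n + 1)) (y n) < min η c) :
    ∀ m n, N ≤ n → n ≤ m → dist (y n) (y m) ≤ c := by
  have hdη n (hn : N ≤ n) : dist (y (n + 1)) (y n) < η := (hN n hn).trans_le (min_le_left _ _)
  have hdc n (hn : N ≤ n) : dist (y (n + 1)) (y n) < c := (hN n hn).trans_le (min_le_right _ _)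
  have hc : 0 ≤ c := dist_nonneg.trans (hdc N le_rfl).le
  have hη0 : 0 ≤ η := dist_nonneg.trans (hdη N le_rfl).le
  intro m
  induction m with
  | zero =>
    intro n _ hn
    rw [Nat.le_zero.1 hn, dist_self]
    exact hc
  | succ m ih =>
    intro n hNn hn
    obtain rfl | rfl | hnm : n = m + 1 ∨ n = m ∨ n + 1 ≤ m := by omega
    · rw [dist_self]; exact hc
    · rw [dist_comm]; exact (hdc n hNn).le
    have h₁ := ih n hNn (by omega)
    have h₂ := ih (n + 1) (by omega) hnm
    have hdn := hdη n hNn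
    have hdm := hdη m (by omega)
    have htri₁ : dist (y (m + 1)) (y n) ≤ dist (y (m + 1)) (y m) + dist (y n) (y m) := by
      rw [dist_comm (y n)]; exact dist_triangle _ _ _
    have hbound : ciricBound (y n) (y m) (y (n + 1)) (y (m + 1)) ≤ c + η := by
      unfold ciricBound
      refine max_le (max_le ?_ ?_) (max_le ?_ ?_) <;> linarith
    have hnext : dist (y (n + 1)) (y (m + 1)) < c - η :=
      ((hy n m).trans (hφmono (ciricBound_nonneg ..) (mem_Ici.2 (by linarith)) hbound)).trans_lt
        hη
    calc dist (y n) (y (m + 1)) ≤ dist (y n) (y (n + 1)) + dist (y (n + 1)) (y (m + 1)) :=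
          dist_triangle _ _ _
      _ ≤ c := by rw [dist_comm]; linarith

theorem cauchySeq_of_dist_le_apply_ciricBound (hφmono : MonotoneOn φ (Ici 0))
    (hφcont : ContinuousOn φ (Ici 0)) (hφlt : ∀ t > (0 : ℝ), φ t < t)
    (hy : ∀ n m, dist (y (n + 1)) (y (m + 1)) ≤
      φ (ciricBound (y n) (y m) (y (n + 1)) (y (m + 1)))) :
    CauchySeq y := by
  refine Metric.cauchySeq_iff'.2 fun ε hε => ?_
  have hε2 := half_pos hε
  obtain ⟨η, hη, hφη⟩ := exists_pos_apply_add_lt_sub hφcont hε2 (hφlt _ hε2)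
  obtain ⟨N, hN⟩ := eventually_atTop.1 <|
    (tendsto_dist_succ_zero hφmono hφcont hφlt hy).eventually (gt_mem_nhds (lt_min hη hε2))
  refine ⟨N, fun n hn => ?_⟩
  rw [dist_comm]
  exact (dist_le_of_dist_succ_lt hφmono hy hφη hN n N le_rfl hn).trans_lt (half_lt_self hε)

theorem eq_of_tendsto_of_dist_le_apply (hφcont : ContinuousOn φ (Ici 0))
    (hφlt : ∀ t > (0 : ℝ), φ t < t) {p q : X} (hlim : Tendsto y atTop (𝓝 p))
    (hq : ∀ n, dist q (y (n + 1)) ≤ φ (ciricBound p (y n) q (y (n + 1)))) : q = p := by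
  have hlim' : Tendsto (fun n => y (n + 1)) atTop (𝓝 p) := hlim.comp (tendsto_add_atTop_nat 1)
  have hbound := (tendsto_const_nhds (x := p)).ciricBound hlim (tendsto_const_nhds (x := q)) hlim'
  rw [ciricBound_left_self] at hbound
  exact eq_of_dist_le_apply_dist hφlt <| le_apply_of_tendsto hφcont hbound
    (tendsto_const_nhds.dist hlim') (fun _ => ciricBound_nonneg ..) hq

end sequence

theorem exists_seq_apply_succ_eq {X : Type*} {K : Set X} {T f : X → X} {x₀ : X}
    (hx₀ : x₀ ∈ K) (hsub : T '' K ⊆ f '' K) :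
    ∃ x : ℕ → X, (∀ n, x n ∈ K) ∧ ∀ n, f (x (n + 1)) = T (x n) := by
  have hstep (a : K) : ∃ b : K, f b = T a := by
    obtain ⟨b, hb, hfb⟩ := hsub (mem_image_of_mem T a.2)
    exact ⟨⟨b, hb⟩, hfb⟩
  choose g hg using hstep
  refine ⟨fun n => g^[n] ⟨x₀, hx₀⟩, fun n => (g^[n] _).2, fun n => ?_⟩
  simp only [Function.iterate_succ_apply', hg]

theorem apply_eq_apply_of_coincidence {X : Type*} [MetricSpace X] {K : Set X} {T f : X → X}
    {φ : ℝ → ℝ} (hφlt : ∀ t > (0 : ℝ), φ t < t)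
    (hcontr : ∀ x ∈ K, ∀ y ∈ K,
      dist (T x) (T y) ≤ φ (ciricBound (f x) (f y) (T x) (T y)))
    {x y : X} (hx : x ∈ K) (hy : y ∈ K) (hTx : T x = f x) (hTy : T y = f y) : T x = T y := by
  have h := hcontr x hx y hy
  rw [← hTx, ← hTy, ciricBound_self] at h
  exact eq_of_dist_le_apply_dist hφlt h

theorem common_fixed_point_two_maps_general
    {X : Type*} [MetricSpace X] (K : Set X) (hK : K.Nonempty)
    (T f : X → X)
    (hf : Set.MapsTo f K K)
    (hsub : closure (T '' K) ⊆ f '' K)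
    (φ : ℝ → ℝ)
    (hφmono : MonotoneOn φ (Set.Ici 0))
    (hφcont : ContinuousOn φ (Set.Ici 0))
    (hφlt : ∀ t > (0 : ℝ), φ t < t)
    (hcontr : ∀ x ∈ K, ∀ y ∈ K,
      dist (T x) (T y) ≤ φ
        (max (max (dist (f x) (f y)) (dist (T x) (f x)))
          (max (dist (T y) (f y)) ((dist (T x) (f y) + dist (T y) (f x)) / 2))))
    (hcomplete : IsComplete (closure (T '' K)) ∨ IsComplete (f '' K))
    (hwc : ∀ x ∈ K, T x = f x → T (f x) = f (T x)) :
    ∃! z, z ∈ K ∧ T z = z ∧ f z = z := by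
  obtain ⟨x₀, hx₀⟩ := hK
  obtain ⟨x, hxK, hx⟩ := exists_seq_apply_succ_eq hx₀ (subset_closure.trans hsub)
  have hy (n m : ℕ) : dist (T (x (n + 1))) (T (x (m + 1))) ≤
      φ (ciricBound (T (x n)) (T (x m)) (T (x (n + 1))) (T (x (m + 1)))) := by
    rw [← hx n, ← hx m]
    exact hcontr _ (hxK (n + 1)) _ (hxK (m + 1))
  have hcauchy : CauchySeq fun n => T (x n) :=
    cauchySeq_of_dist_le_apply_ciricBound hφmono hφcont hφlt hy
  obtain ⟨_, ⟨u, huK, rfl⟩, hlim⟩ :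
      ∃ p ∈ f '' K, Tendsto (fun n => T (x n)) atTop (𝓝 p) := by
    rcases hcomplete with hc | hc
    · obtain ⟨p, hp, hlim⟩ := cauchySeq_tendsto_of_isComplete hc
        (fun n => subset_closure (mem_image_of_mem T (hxK n))) hcauchy
      exact ⟨p, hsub hp, hlim⟩
    · exact cauchySeq_tendsto_of_isComplete hc
        (fun n => hx n ▸ mem_image_of_mem f (hxK (n + 1))) hcauchy
  have hTu : T u = f u := eq_of_tendsto_of_dist_le_apply hφcont hφlt hlim fun n => by
    rw [← hx n]
    exact hcontr u huK _ (hxK (n + 1))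
  have hfuK : f u ∈ K := hf huK
  have hTfu : T (f u) = f (f u) := by rw [hwc u huK hTu, hTu]
  have hfix : T (f u) = f u :=
    (apply_eq_apply_of_coincidence hφlt hcontr hfuK huK hTfu hTu).trans hTu
  refine ⟨f u, ⟨hfuK, hfix, hTfu.symm.trans hfix⟩, fun z ⟨hzK, hTz, hfz⟩ => ?_⟩
  rw [← hTz, ← hfix]
  exact apply_eq_apply_of_coincidence hφlt hcontr hzK hfuK (hTz.trans hfz.symm) hTfu

/-- Corollary: common fixed point for a weakly compatible pair `(T, f)` of self-maps of a
subset `K` of a metric space under a `φ`-contractive condition, assuming either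
`closure (T '' K)` or `f '' K` is complete. -/
theorem common_fixed_point_two_maps
    {X : Type*} [MetricSpace X] (K : Set X) (hK : K.Nonempty)
    (T f : X → X)
    (hT : Set.MapsTo T K K) (hf : Set.MapsTo f K K)
    (hsub : closure (T '' K) ⊆ f '' K)
    (φ : ℝ → ℝ)
    (hφmono : MonotoneOn φ (Set.Ici 0))
    (hφcont : ContinuousOn φ (Set.Ici 0))
    (hφnonneg : ∀ t ≥ (0 : ℝ), 0 ≤ φ t)
    (hφlt : ∀ t > (0 : ℝ), φ t < t)
    (hcontr : ∀ x ∈ K, ∀ y ∈ K,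
      dist (T x) (T y) ≤ φ
        (max (max (dist (f x) (f y)) (dist (T x) (f x)))
          (max (dist (T y) (f y)) ((dist (T x) (f y) + dist (T y) (f x)) / 2))))
    (hcomplete : IsComplete (closure (T '' K)) ∨ IsComplete (f '' K))
    (hwc : ∀ x ∈ K, T x = f x → T (f x) = f (T x)) :
    ∃! z, z ∈ K ∧ T z = z ∧ f z = z :=
  common_fixed_point_two_maps_general K hK T f hf hsub φ hφmono hφcont hφlt hcontr hcomplete hwc
end

section
/- Let T and f be self-maps of a complete metric space (X,d) with T(X) ⊆ f(X), and suppose there is r ∈ [0,1) such that for all x, y ∈ X, d(Tx,Ty) ≤ r·max{ d(fx,fy), d(Tx,fx), d(Ty,fy), (1/2)[d(Tx,fy) + d(Ty,fx)] }. If either (a) the pair (T,f) is compatible and at least one of T, f is continuous, or (b) the pair (T,f) is compatible and reciprocally continuous, then F(T) ∩ F(f) is a singleton. -/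
/-- Two self-maps `T` and `f` of a metric space are *compatible* if
`d(f(T xₙ), T(f xₙ)) → 0` whenever `f xₙ → t` and `T xₙ → t` for some `t`. -/
def CompatiblePair {X : Type*} [MetricSpace X] (T f : X → X) : Prop :=
  ∀ (x : ℕ → X) (t : X),
    Filter.Tendsto (fun n => f (x n)) Filter.atTop (nhds t) →
    Filter.Tendsto (fun n => T (x n)) Filter.atTop (nhds t) →
    Filter.Tendsto (fun n => dist (f (T (x n))) (T (f (x n)))) Filter.atTop (nhds 0)

/-- Two self-maps `T` and `f` of a metric space are *reciprocally continuous* if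
`f (T xₙ) → f t` and `T (f xₙ) → T t` whenever `f xₙ → t` and `T xₙ → t`. -/
def ReciprocallyContinuous {X : Type*} [MetricSpace X] (T f : X → X) : Prop :=
  ∀ (x : ℕ → X) (t : X),
    Filter.Tendsto (fun n => f (x n)) Filter.atTop (nhds t) →
    Filter.Tendsto (fun n => T (x n)) Filter.atTop (nhds t) →
    Filter.Tendsto (fun n => f (T (x n))) Filter.atTop (nhds (f t)) ∧
    Filter.Tendsto (fun n => T (f (x n))) Filter.atTop (nhds (T t))

/-! The Jungck iteration `f xₙ₊₁ = T xₙ`, possible since `T(X) ⊆ f(X)`, makes `d(T xₙ, T xₙ₊₁)`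
decrease geometrically, so `T xₙ → t` and `f xₙ → t`. Passing to the limit in the contraction
condition gives `d(p, q) ≤ r · d(p, q)`, hence `p = q`, whenever `T uₙ, f uₙ → p` and
`T vₙ, f vₙ → q`; and `T z = p` whenever moreover `f z = p`. In each case compatibility and the
continuity assumption provide such sequences (among `xₙ`, `T xₙ`, `f xₙ`) forcing
`T t = f t = t`; uniqueness is the same inequality for constant sequences. -/

open Filter Topology

theorem CompatiblePair.apply_comm_of_eq {X : Type*} [MetricSpace X] {T f : X → X}
    (hcomp : CompatiblePair T f) {u : X} (hu : T u = f u) : f (T u) = T (f u) :=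
  dist_eq_zero.mp <| tendsto_nhds_unique tendsto_const_nhds <|
    hcomp (fun _ => u) (f u) tendsto_const_nhds (tendsto_const_nhds_iff.mpr hu)

theorem le_mul_of_le_mul_max {a b r : ℝ} (hb : 0 ≤ b) (hr0 : 0 ≤ r) (hr1 : r < 1)
    (h : a ≤ r * max a b) : a ≤ r * b := by
  rcases le_total a b with hab | hba
  · rwa [max_eq_right hab] at h
  · rw [max_eq_left hba] at h
    nlinarith [mul_nonneg hr0 hb]

section

variable {X : Type*} [MetricSpace X]

/-- The right-hand side of the contraction condition, evaluated at `a = T x`, `b = f x`,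
`c = T y`, `d = f y`. -/
noncomputable def contractionBound (a b c d : X) : ℝ :=
  max (max (dist b d) (dist a b)) (max (dist c d) ((dist a d + dist c b) / 2))

theorem contractionBound_self_self (p q : X) : contractionBound p p q q = dist p q := by
  simp [contractionBound, dist_comm q p]

theorem contractionBound_self_left (p q : X) : contractionBound p p q p = dist p q := by
  simp [contractionBound, dist_comm q p]

theorem contractionBound_le_max (s q p : X) :
    contractionBound s q q p ≤ max (dist s q) (dist q p) := by
  have := dist_triangle s q p
  simp only [contractionBound, dist_self, add_zero]
  refine max_le (max_le (le_max_right _ _) (le_max_left _ _)) (max_le (le_max_right _ _) ?_)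
  linarith [le_max_left (dist s q) (dist q p), le_max_right (dist s q) (dist q p)]

theorem Filter.Tendsto.contractionBound {ι : Type*} {l : Filter ι} {a b c d : ι → X}
    {a₀ b₀ c₀ d₀ : X} (ha : Tendsto a l (𝓝 a₀)) (hb : Tendsto b l (𝓝 b₀))
    (hc : Tendsto c l (𝓝 c₀)) (hd : Tendsto d l (𝓝 d₀)) :
    Tendsto (fun i => contractionBound (a i) (b i) (c i) (d i)) l
      (𝓝 (contractionBound a₀ b₀ c₀ d₀)) :=
  ((hb.dist hd).max (ha.dist hb)).max
    ((hc.dist hd).max (((ha.dist hd).add (hc.dist hb)).div_const 2))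

theorem eq_of_dist_le_mul_self {r : ℝ} (hr1 : r < 1) {p q : X} (h : dist p q ≤ r * dist p q) :
    p = q :=
  dist_le_zero.mp (by nlinarith [dist_nonneg (x := p) (y := q)])

def IsGeneralizedContraction (T f : X → X) (r : ℝ) : Prop :=
  ∀ x y, dist (T x) (T y) ≤ r * contractionBound (T x) (f x) (T y) (f y)

namespace IsGeneralizedContraction

variable {T f : X → X} {r : ℝ}

theorem dist_le_of_tendsto (hq : IsGeneralizedContraction T f r) {u v : ℕ → X} {a b c d : X}
    (hTu : Tendsto (fun n => T (u n)) atTop (𝓝 a)) (hfu : Tendsto (fun n => f (u n)) atTop (𝓝 b))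
    (hTv : Tendsto (fun n => T (v n)) atTop (𝓝 c)) (hfv : Tendsto (fun n => f (v n)) atTop (𝓝 d)) :
    dist a c ≤ r * contractionBound a b c d :=
  le_of_tendsto_of_tendsto' (hTu.dist hTv) ((hTu.contractionBound hfu hTv hfv).const_mul r)
    fun n => hq (u n) (v n)

theorem eq_of_tendsto (hq : IsGeneralizedContraction T f r) (hr1 : r < 1) {u v : ℕ → X} {p q : X}
    (hTu : Tendsto (fun n => T (u n)) atTop (𝓝 p)) (hfu : Tendsto (fun n => f (u n)) atTop (𝓝 p))
    (hTv : Tendsto (fun n => T (v n)) atTop (𝓝 q)) (hfv : Tendsto (fun n => f (v n)) atTop (𝓝 q)) :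
    p = q :=
  eq_of_dist_le_mul_self hr1 <| by
    simpa only [contractionBound_self_self] using hq.dist_le_of_tendsto hTu hfu hTv hfv

theorem apply_eq_of_tendsto (hq : IsGeneralizedContraction T f r) (hr1 : r < 1) {u : ℕ → X}
    {p z : X} (hTu : Tendsto (fun n => T (u n)) atTop (𝓝 p))
    (hfu : Tendsto (fun n => f (u n)) atTop (𝓝 p)) (hz : f z = p) : T z = p := by
  have h := hq.dist_le_of_tendsto (v := fun _ => z) hTu hfu tendsto_const_nhds tendsto_const_nhds
  rw [hz, contractionBound_self_left] at h
  exact (eq_of_dist_le_mul_self hr1 h).symm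

theorem dist_succ_le (hq : IsGeneralizedContraction T f r) (hr0 : 0 ≤ r) (hr1 : r < 1)
    {x : ℕ → X} (hx : ∀ n, f (x (n + 1)) = T (x n)) (n : ℕ) :
    dist (T (x (n + 1))) (T (x (n + 2))) ≤ r * dist (T (x n)) (T (x (n + 1))) := by
  have h := hq (x (n + 2)) (x (n + 1))
  rw [hx (n + 1), hx n] at h
  rw [dist_comm, dist_comm (T (x n))]
  refine le_mul_of_le_mul_max dist_nonneg hr0 hr1 (h.trans ?_)
  gcongr
  exact contractionBound_le_max _ _ _

theorem cauchySeq_apply (hq : IsGeneralizedContraction T f r) (hr0 : 0 ≤ r) (hr1 : r < 1)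
    {x : ℕ → X} (hx : ∀ n, f (x (n + 1)) = T (x n)) : CauchySeq fun n => T (x n) := by
  refine cauchySeq_of_le_geometric r (dist (T (x 0)) (T (x 1))) hr1 fun n => ?_
  induction n with
  | zero => simp
  | succ n ih =>
    calc dist (T (x (n + 1))) (T (x (n + 2)))
        ≤ r * dist (T (x n)) (T (x (n + 1))) := hq.dist_succ_le hr0 hr1 hx n
      _ ≤ r * (dist (T (x 0)) (T (x 1)) * r ^ n) := by gcongr
      _ = dist (T (x 0)) (T (x 1)) * r ^ (n + 1) := by ring

theorem exists_tendsto [CompleteSpace X] [Nonempty X] (hq : IsGeneralizedContraction T f r)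
    (hsub : Set.range T ⊆ Set.range f) (hr0 : 0 ≤ r) (hr1 : r < 1) :
    ∃ (x : ℕ → X) (t : X), Tendsto (fun n => f (x n)) atTop (𝓝 t) ∧
      Tendsto (fun n => T (x n)) atTop (𝓝 t) := by
  choose c hc using fun y => hsub (Set.mem_range_self (f := T) y)
  let x : ℕ → X := fun n => c^[n] (Classical.arbitrary X)
  have hx : ∀ n, f (x (n + 1)) = T (x n) := fun n => by
    simp only [x, Function.iterate_succ_apply']
    exact hc _
  obtain ⟨t, hT⟩ := cauchySeq_tendsto_of_complete (hq.cauchySeq_apply hr0 hr1 hx)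
  exact ⟨x, t, (tendsto_add_atTop_iff_nat 1).mp (hT.congr fun n => (hx n).symm), hT⟩

section CommonFixedPoint

variable (hq : IsGeneralizedContraction T f r) (hr1 : r < 1) (hcomp : CompatiblePair T f)
  {x : ℕ → X} {t : X} (hfx : Tendsto (fun n => f (x n)) atTop (𝓝 t))
  (hTx : Tendsto (fun n => T (x n)) atTop (𝓝 t))
include hq hr1 hcomp hfx hTx

theorem exists_common_fixedPt_of_continuous_left (hsub : Set.range T ⊆ Set.range f)
    (hT : Continuous T) : ∃ z, T z = z ∧ f z = z := by
  have hTT : Tendsto (fun n => T (T (x n))) atTop (𝓝 (T t)) := (hT.tendsto t).comp hTx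
  have hTf : Tendsto (fun n => T (f (x n))) atTop (𝓝 (T t)) := (hT.tendsto t).comp hfx
  have hfT : Tendsto (fun n => f (T (x n))) atTop (𝓝 (T t)) :=
    hTf.congr_dist ((hcomp x t hfx hTx).congr fun n => dist_comm _ _)
  have hTt : T t = t := hq.eq_of_tendsto hr1 hTT hfT hTx hfx
  obtain ⟨u, hfu⟩ := hsub (Set.mem_range_self t)
  rw [hTt] at hfu hTT hfT
  have hTu : T u = t := hq.apply_eq_of_tendsto hr1 hTT hfT hfu
  have hft : f (T u) = T (f u) := hcomp.apply_comm_of_eq (hTu.trans hfu.symm)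
  rw [hTu, hfu, hTt] at hft
  exact ⟨t, hTt, hft⟩

theorem exists_common_fixedPt_of_continuous_right (hf : Continuous f) :
    ∃ z, T z = z ∧ f z = z := by
  have hff : Tendsto (fun n => f (f (x n))) atTop (𝓝 (f t)) := (hf.tendsto t).comp hfx
  have hTf : Tendsto (fun n => T (f (x n))) atTop (𝓝 (f t)) :=
    ((hf.tendsto t).comp hTx).congr_dist (hcomp x t hfx hTx)
  have hft : f t = t := hq.eq_of_tendsto hr1 hTf hff hTx hfx
  exact ⟨t, (hq.apply_eq_of_tendsto hr1 hTf hff rfl).trans hft, hft⟩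

theorem exists_common_fixedPt_of_reciprocallyContinuous (hrec : ReciprocallyContinuous T f) :
    ∃ z, T z = z ∧ f z = z := by
  obtain ⟨hfT, hTf⟩ := hrec x t hfx hTx
  have hft : f t = T t :=
    dist_eq_zero.mp (tendsto_nhds_unique (hfT.dist hTf) (hcomp x t hfx hTx))
  have htT : t = T t :=
    hq.eq_of_tendsto hr1 hTx hfx tendsto_const_nhds (tendsto_const_nhds_iff.mpr hft)
  exact ⟨t, htT.symm, hft.trans htT.symm⟩

end CommonFixedPoint

end IsGeneralizedContraction

end

/-- Babu et al., Theorem 3.1: for self-maps `T`, `f` of a complete metric space with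
`T(X) ⊆ f(X)` and the quasi-contraction condition, if the pair `(T,f)` is compatible
and either `T` or `f` is continuous, or the pair is compatible and reciprocally
continuous, then `F(T) ∩ F(f)` is a singleton. -/
theorem babu_theorem_31
    {X : Type*} [MetricSpace X] [CompleteSpace X] [Nonempty X]
    (T f : X → X)
    (hsub : Set.range T ⊆ Set.range f)
    (r : ℝ) (hr0 : 0 ≤ r) (hr1 : r < 1)
    (hcontr : ∀ x y,
      dist (T x) (T y) ≤ r * max (max (dist (f x) (f y)) (dist (T x) (f x)))
        (max (dist (T y) (f y)) ((dist (T x) (f y) + dist (T y) (f x)) / 2)))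
    (hyp : (CompatiblePair T f ∧ (Continuous T ∨ Continuous f)) ∨
           (CompatiblePair T f ∧ ReciprocallyContinuous T f)) :
    ∃! z, T z = z ∧ f z = z := by
  have hq : IsGeneralizedContraction T f r := hcontr
  obtain ⟨x, t, hfx, hTx⟩ := hq.exists_tendsto hsub hr0 hr1
  obtain ⟨z, hz⟩ : ∃ z, T z = z ∧ f z = z := by
    rcases hyp with ⟨hcomp, hT | hf⟩ | ⟨hcomp, hrec⟩
    · exact hq.exists_common_fixedPt_of_continuous_left hr1 hcomp hfx hTx hsub hT
    · exact hq.exists_common_fixedPt_of_continuous_right hr1 hcomp hfx hTx hf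
    · exact hq.exists_common_fixedPt_of_reciprocallyContinuous hr1 hcomp hfx hTx hrec
  refine ⟨z, hz, fun w hw => ?_⟩
  exact hq.eq_of_tendsto hr1 (u := fun _ => w) (v := fun _ => z)
    (tendsto_const_nhds_iff.mpr hw.1) (tendsto_const_nhds_iff.mpr hw.2)
    (tendsto_const_nhds_iff.mpr hz.1) (tendsto_const_nhds_iff.mpr hz.2)
end
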